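/- arXiv:1602.01215 — 6 statements merged into one kernel-verified Lean document; each statement's English description precedes it below -/
import Mathlib

section
/- Let m ≥ 2 and suppose integers n, l, k₁,…,k_m satisfy: l ≥ 1, 0 ≤ k₁ ≤ ⋯ ≤ k_l ≤ n/2, k_{l+1} = ⋯ = k_m = 1, some kᵢ ≠ 0, and M := Σ_{j=1}^{m} kⱼ - (1/n)Σ_{j=1}^{m} kⱼ² + 2l is an even integer with 0 < M ≤ 2m. Then n ≤ m² + m - 1. -/
/-!
Write `K = Σ_{j ≤ l} kⱼ`, `Q = Σ_{j ≤ l} kⱼ²` and `s = m - l`, so that `Σ kⱼ = K + s` and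
`Σ kⱼ² = Q + s`. Integrality of `M` makes `n` divide `Q + s > 0`, whence `n ≤ Q + s`, and `M ≤ 2m`
reads `nK - Q ≤ s(n + 1)`. If `n > (s + 1)² + s`, then `Q ≤ K kₗ ≤ Kn/2` forces `K ≤ 2s`, then
`Q ≤ 2sK` forces `K ≤ s + 1`, so `n ≤ Q + s ≤ (s + 1)² + s`, a contradiction. Finally `s ≤ m - 1`.
-/

open Finset

theorem le_add_one_sq_add_of_sum_bounds {n s K Q c : ℤ} (hs : 0 ≤ s) (hc : 0 ≤ c) (hcK : c ≤ K)
    (hcn : 2 * c ≤ n) (hQ : Q ≤ K * c) (hKQ : n * K - Q ≤ s * (n + 1)) (hnQ : n ≤ Q + s) :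
    n ≤ (s + 1) ^ 2 + s := by
  by_contra! hn
  have hK2s : K ≤ 2 * s := by nlinarith
  have hKs : K ≤ s + 1 := by nlinarith
  nlinarith [mul_le_mul hKs (hcK.trans hKs) hc (by omega)]

theorem sum_Icc_one_eq_sum_add_of_eq_one {g : ℕ → ℤ} {l m : ℕ} (hlm : l ≤ m)
    (hg : ∀ j, l < j → j ≤ m → g j = 1) :
    ∑ j ∈ Icc 1 m, g j = ∑ j ∈ Icc 1 l, g j + (m - l : ℤ) := by
  rw [← zero_add 1, Icc_add_one_left_eq_Ioc, Icc_add_one_left_eq_Ioc,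
    ← sum_Ioc_consecutive _ l.zero_le hlm,
    sum_congr rfl fun j hj => hg j (mem_Ioc.1 hj).1 (mem_Ioc.1 hj).2]
  simp [hlm]

theorem sum_sq_le_sum_mul {ι R : Type*} [CommSemiring R] [PartialOrder R] [IsOrderedRing R]
    {s : Finset ι} {f : ι → R} {c : R} (h0 : ∀ i ∈ s, 0 ≤ f i) (hc : ∀ i ∈ s, f i ≤ c) :
    ∑ i ∈ s, f i ^ 2 ≤ (∑ i ∈ s, f i) * c := by
  rw [sum_mul]
  exact sum_le_sum fun i hi => by rw [sq]; exact mul_le_mul_of_nonneg_left (hc i hi) (h0 i hi)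

theorem Int.dvd_of_sub_one_div_mul_eq {n a b c : ℤ} (hn : n ≠ 0)
    (h : (a : ℝ) - 1 / n * b = c) : n ∣ b := by
  refine ⟨a - c, ?_⟩
  have : (b : ℝ) = n * (a - c) := by rw [← h]; field_simp; ring
  exact_mod_cast this

theorem Int.mul_sub_le_of_sub_one_div_mul_le {n a b c : ℤ} (hn : 0 < n)
    (h : (a : ℝ) - 1 / n * b ≤ c) : n * a - b ≤ n * c := by
  have hnR : (0 : ℝ) < n := by exact_mod_cast hn
  have : (n : ℝ) * a - b ≤ n * c := by
    have := mul_le_mul_of_nonneg_left h hnR.le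
    rwa [mul_sub, ← mul_assoc, mul_one_div_cancel hnR.ne', one_mul] at this
  exact_mod_cast this

theorem stmt_5_general (m l : ℕ) (n : ℤ) (k : ℕ → ℤ)
    (hl : 1 ≤ l) (hlm : l ≤ m)
    (h0 : 0 ≤ k 1)
    (hmono : ∀ i j : ℕ, 1 ≤ i → i ≤ j → j ≤ l → k i ≤ k j)
    (hhalf : (k l : ℝ) ≤ (n : ℝ) / 2)
    (hone : ∀ j : ℕ, l < j → j ≤ m → k j = 1)
    (hne : ∃ i ∈ Finset.Icc 1 m, k i ≠ 0)
    (heven : ∃ z : ℤ,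
      (∑ j ∈ Finset.Icc 1 m, (k j : ℝ))
        - (1 / (n : ℝ)) * (∑ j ∈ Finset.Icc 1 m, (k j : ℝ) ^ 2) + 2 * l
        = 2 * (z : ℝ))
    (hle : (∑ j ∈ Finset.Icc 1 m, (k j : ℝ))
        - (1 / (n : ℝ)) * (∑ j ∈ Finset.Icc 1 m, (k j : ℝ) ^ 2) + 2 * l
        ≤ 2 * m) :
    n ≤ (m : ℤ) ^ 2 + m - 1 := by
  rcases le_or_gt n 0 with hn | hn
  · nlinarith [(Nat.cast_le (α := ℤ)).2 (hl.trans hlm)]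
  obtain ⟨z, hz⟩ := heven
  set A := ∑ j ∈ Icc 1 m, k j with hA
  set B := ∑ j ∈ Icc 1 m, k j ^ 2 with hB
  have hAR : ∑ j ∈ Icc 1 m, (k j : ℝ) = A := by push_cast [hA]; rfl
  have hBR : ∑ j ∈ Icc 1 m, (k j : ℝ) ^ 2 = B := by push_cast [hB]; rfl
  rw [hAR, hBR] at hz hle
  have hk : ∀ j ∈ Icc 1 l, 0 ≤ k j ∧ k j ≤ k l := fun j hj =>
    have ⟨h1j, hjl⟩ := mem_Icc.1 hj
    ⟨h0.trans (hmono 1 j le_rfl h1j hjl), hmono j l h1j hjl le_rfl⟩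
  have hB_pos : 0 < B := by
    obtain ⟨i, hi, hki⟩ := hne
    exact (by positivity : 0 < k i ^ 2).trans_le (single_le_sum (fun j _ => sq_nonneg (k j)) hi)
  have hnB : n ≤ B := Int.le_of_dvd hB_pos <|
    Int.dvd_of_sub_one_div_mul_eq (a := A + 2 * l) (c := 2 * z) hn.ne' (by push_cast; linarith)
  have hAB : n * (A + 2 * l) - B ≤ n * (2 * m) :=
    Int.mul_sub_le_of_sub_one_div_mul_le hn (by push_cast; linarith)
  rw [hA, sum_Icc_one_eq_sum_add_of_eq_one hlm hone] at hAB
  rw [hB, sum_Icc_one_eq_sum_add_of_eq_one hlm fun j hlj hjm => by simp [hone j hlj hjm]] at hAB hnB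
  have hbound := le_add_one_sq_add_of_sum_bounds (s := m - l) (c := k l)
    (by omega) (hk l (right_mem_Icc.2 hl)).1
    (single_le_sum (fun j hj => (hk j hj).1) (right_mem_Icc.2 hl))
    (by exact_mod_cast (by linarith : (2 * k l : ℝ) ≤ n))
    (sum_sq_le_sum_mul (fun j hj => (hk j hj).1) (fun j hj => (hk j hj).2))
    (by linear_combination hAB) hnB
  nlinarith

/-- Let `m ≥ 2` and suppose integers `n, l, k₁,…,k_m` satisfy: `l ≥ 1`,
`0 ≤ k₁ ≤ ⋯ ≤ k_l ≤ n/2`, `k_{l+1} = ⋯ = k_m = 1`, some `kᵢ ≠ 0`, and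
`M := Σⱼ kⱼ - (1/n)Σⱼ kⱼ² + 2l` is an even integer with `0 < M ≤ 2m`.
Then `n ≤ m² + m - 1`. -/
theorem stmt_5 (m l : ℕ) (n : ℤ) (k : ℕ → ℤ)
    (hm : 2 ≤ m) (hl : 1 ≤ l) (hlm : l ≤ m)
    (h0 : 0 ≤ k 1)
    (hmono : ∀ i j : ℕ, 1 ≤ i → i ≤ j → j ≤ l → k i ≤ k j)
    (hhalf : (k l : ℝ) ≤ (n : ℝ) / 2)
    (hone : ∀ j : ℕ, l < j → j ≤ m → k j = 1)
    (hne : ∃ i ∈ Finset.Icc 1 m, k i ≠ 0)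
    (heven : ∃ z : ℤ,
      (∑ j ∈ Finset.Icc 1 m, (k j : ℝ))
        - (1 / (n : ℝ)) * (∑ j ∈ Finset.Icc 1 m, (k j : ℝ) ^ 2) + 2 * l
        = 2 * (z : ℝ))
    (hpos : 0 < (∑ j ∈ Finset.Icc 1 m, (k j : ℝ))
        - (1 / (n : ℝ)) * (∑ j ∈ Finset.Icc 1 m, (k j : ℝ) ^ 2) + 2 * l)
    (hle : (∑ j ∈ Finset.Icc 1 m, (k j : ℝ))
        - (1 / (n : ℝ)) * (∑ j ∈ Finset.Icc 1 m, (k j : ℝ) ^ 2) + 2 * l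
        ≤ 2 * m) :
    n ≤ (m : ℤ) ^ 2 + m - 1 :=
  stmt_5_general m l n k hl hlm h0 hmono hhalf hone hne heven hle
end

section
/- Let n ≥ 2k and let X, Y be a cross-intersecting pair of families of k-element subsets of an n-element set (every A ∈ X and B ∈ Y intersect). Then |X| + |Y| ≤ C(n,k) - C(n-k,k) + 1. -/
open Finset UV
open scoped FinsetFamily

namespace Hilton

def wt (A : Finset ℕ) : ℕ := ∑ x ∈ A, x
def mea (𝒜 : Finset (Finset ℕ)) : ℕ := ∑ A ∈ 𝒜, wt A
def Cross (X Y : Finset (Finset ℕ)) : Prop := ∀ A ∈ X, ∀ B ∈ Y, (A ∩ B).Nonempty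

lemma Cross.symm {X Y : Finset (Finset ℕ)} (h : Cross X Y) : Cross Y X := by
  intro B hB A hA; rw [inter_comm]; exact h A hA B hB

lemma compress_moved {i j : ℕ} {A : Finset ℕ}
    (h : compress {i} {j} A ≠ A) :
    i ∉ A ∧ j ∈ A ∧ compress {i} {j} A = (A ∪ {i}) \ {j} := by
  unfold compress at h ⊢
  split_ifs at h ⊢ with hc
  · obtain ⟨h1, h2⟩ := hc
    exact ⟨fun hi => (disjoint_left.1 h1 (mem_singleton_self i)) hi,
      singleton_subset_iff.1 h2, by rw [sup_eq_union]⟩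
  · exact absurd rfl h

lemma compress_apply {i j : ℕ} {A : Finset ℕ} (hi : i ∉ A) (hj : j ∈ A) :
    compress {i} {j} A = (A ∪ {i}) \ {j} := by
  rw [compress_of_disjoint_of_le (by simpa using hi) (by simpa using hj), sup_eq_union]

lemma mea_split (i j : ℕ) (𝒜 : Finset (Finset ℕ)) :
    mea (𝓒 {i} {j} 𝒜) = ∑ A ∈ 𝒜.filter (fun A => compress {i} {j} A ∈ 𝒜), wt A
      + ∑ A ∈ 𝒜.filter (fun A => compress {i} {j} A ∉ 𝒜), wt (compress {i} {j} A) := by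
  classical
  rw [mea, compression, sum_union compress_disjoint, filter_image]
  congr 1
  rw [sum_image]
  intro x hx y hy hxy
  exact compress_injOn (by simpa using hx) (by simpa using hy) hxy

lemma mea_compression_lt {i j : ℕ} {𝒜 : Finset (Finset ℕ)} (hij : i < j)
    (h : 𝓒 {i} {j} 𝒜 ≠ 𝒜) :
    mea (𝓒 {i} {j} 𝒜) < mea 𝒜 := by
  classical
  have hwlt : ∀ A : Finset ℕ, compress {i} {j} A ≠ A → wt (compress {i} {j} A) < wt A := by
    intro A hA
    obtain ⟨hi, hj, hform⟩ := compress_moved hA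
    rw [hform]
    have h2 : (A ∪ {i}) \ {j} = (insert i A).erase j := by
      rw [union_comm, insert_eq, erase_eq]
    rw [h2]
    have hsum : wt ((insert i A).erase j) + j = wt (insert i A) :=
      Finset.sum_erase_add _ _ (mem_insert_of_mem hj)
    have hins : wt (insert i A) = i + wt A := Finset.sum_insert hi
    omega
  have hN : (𝒜.filter (fun A => compress {i} {j} A ∉ 𝒜)).Nonempty := by
    rw [filter_nonempty_iff]
    by_contra hc
    push_neg at hc
    apply h
    rw [compression]
    have h1 : 𝒜.filter (fun A => compress {i} {j} A ∈ 𝒜) = 𝒜 :=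
      filter_true_of_mem fun A hA => hc A hA
    have h2 : (𝒜.image (compress {i} {j})).filter (fun a => a ∉ 𝒜) = ∅ := by
      rw [filter_eq_empty_iff]
      intro a ha
      simp only [mem_image] at ha
      obtain ⟨b, hb, rfl⟩ := ha
      simp only [not_not]
      exact hc b hb
    rw [h1, h2, union_empty]
  calc mea (𝓒 {i} {j} 𝒜)
      = ∑ A ∈ 𝒜.filter (fun A => compress {i} {j} A ∈ 𝒜), wt A
        + ∑ A ∈ 𝒜.filter (fun A => compress {i} {j} A ∉ 𝒜), wt (compress {i} {j} A) :=
        mea_split i j 𝒜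
    _ < ∑ A ∈ 𝒜.filter (fun A => compress {i} {j} A ∈ 𝒜), wt A
        + ∑ A ∈ 𝒜.filter (fun A => compress {i} {j} A ∉ 𝒜), wt A := by
        apply Nat.add_lt_add_left
        apply sum_lt_sum_of_nonempty hN
        intro A hA
        rw [mem_filter] at hA
        exact hwlt A (fun heq => hA.2 (by rw [heq]; exact hA.1))
    _ = mea 𝒜 := by rw [mea, sum_filter_add_sum_filter_not]

lemma mea_compression_le {i j : ℕ} {𝒜 : Finset (Finset ℕ)} (hij : i < j) :
    mea (𝓒 {i} {j} 𝒜) ≤ mea 𝒜 := by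
  by_cases h : 𝓒 {i} {j} 𝒜 = 𝒜
  · rw [h]
  · exact (mea_compression_lt hij h).le

lemma cross_aux {i j : ℕ} {X Y : Finset (Finset ℕ)} {A B' : Finset ℕ}
    (hc : Cross X Y) (hA : A ∈ X) (hcA : compress {i} {j} A ∈ X)
    (hB' : B' ∈ 𝓒 {i} {j} Y) : (A ∩ B').Nonempty := by
  rcases mem_compression.1 hB' with ⟨hBY, -⟩ | ⟨-, B, hB, rfl⟩
  · exact hc A hA B' hBY
  · by_cases hmov : compress {i} {j} B = B
    · rw [hmov]; exact hc A hA B hB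
    · obtain ⟨hiB, hjB, hform⟩ := compress_moved hmov
      obtain ⟨x, hx⟩ := hc A hA B hB
      rw [mem_inter] at hx
      by_cases hxj : x = j
      · subst hxj
        by_cases hiA : i ∈ A
        · refine ⟨i, mem_inter.2 ⟨hiA, ?_⟩⟩
          simp only [hform, mem_sdiff, mem_union, mem_singleton]
          exact ⟨Or.inr trivial, fun h => hiB (h ▸ hjB)⟩
        · obtain ⟨y, hy⟩ := hc _ hcA B hB
          rw [mem_inter] at hy
          simp only [compress_apply hiA hx.1, mem_sdiff, mem_union, mem_singleton] at hy
          obtain ⟨⟨hyA | hyi, hyj⟩, hyB⟩ := hy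
          · refine ⟨y, mem_inter.2 ⟨hyA, ?_⟩⟩
            simp only [hform, mem_sdiff, mem_union, mem_singleton]
            exact ⟨Or.inl hyB, hyj⟩
          · exact absurd (hyi ▸ hyB) hiB
      · refine ⟨x, mem_inter.2 ⟨hx.1, ?_⟩⟩
        simp only [hform, mem_sdiff, mem_union, mem_singleton]
        exact ⟨Or.inl hx.2, hxj⟩

lemma cross_compression {i j : ℕ} {X Y : Finset (Finset ℕ)} (hc : Cross X Y) :
    Cross (𝓒 {i} {j} X) (𝓒 {i} {j} Y) := by
  intro A' hA' B' hB'
  rcases mem_compression.1 hA' with ⟨hAX, hcAX⟩ | ⟨hA'n, A, hA, rfl⟩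
  · exact cross_aux hc hAX hcAX hB'
  · by_cases hmovA : compress {i} {j} A = A
    · rw [hmovA]
      exact cross_aux hc hA (by rw [hmovA]; exact hA) hB'
    · obtain ⟨hiA, hjA, hformA⟩ := compress_moved hmovA
      rcases mem_compression.1 hB' with ⟨hBY, hcBY⟩ | ⟨hB'n, B, hB, rfl⟩
      · rw [inter_comm]
        exact cross_aux hc.symm hBY hcBY hA'
      · by_cases hmovB : compress {i} {j} B = B
        · rw [inter_comm, hmovB]
          exact cross_aux hc.symm hB (by rw [hmovB]; exact hB) hA'
        · obtain ⟨hiB, hjB, hformB⟩ := compress_moved hmovB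
          refine ⟨i, mem_inter.2 ⟨?_, ?_⟩⟩
          · simp only [hformA, mem_sdiff, mem_union, mem_singleton]
            exact ⟨Or.inr trivial, fun h => hiA (h ▸ hjA)⟩
          · simp only [hformB, mem_sdiff, mem_union, mem_singleton]
            exact ⟨Or.inr trivial, fun h => hiB (h ▸ hjB)⟩

lemma shift_mem {i j : ℕ} {X : Finset (Finset ℕ)} {A : Finset ℕ}
    (h : 𝓒 {i} {j} X = X) (hA : A ∈ X) (hj : j ∈ A) (hi : i ∉ A) :
    (A ∪ {i}) \ {j} ∈ X := by
  have := sup_sdiff_mem_of_mem_compression (s := X) (u := ({i} : Finset ℕ)) (v := {j})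
    (by rw [h]; exact hA) (by simpa using hj) (by simpa using hi)
  rwa [sup_eq_union] at this

lemma card_meet {r m b : ℕ} {B₀ : Finset ℕ} (hB₀r : B₀ ⊆ range m) (hB₀c : B₀.card = b)
    {F : Finset (Finset ℕ)}
    (hF : ∀ S ∈ F, S.card = r ∧ S ⊆ range m ∧ (S ∩ B₀).Nonempty) :
    F.card + (m - b).choose r ≤ m.choose r := by
  classical
  have hdisj : Disjoint F (powersetCard r (range m \ B₀)) := by
    rw [disjoint_left]
    intro S hS hS'
    rw [mem_powersetCard] at hS'
    obtain ⟨x, hx⟩ := (hF S hS).2.2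
    rw [mem_inter] at hx
    exact (mem_sdiff.1 (hS'.1 hx.1)).2 hx.2
  have hsub : F ∪ powersetCard r (range m \ B₀) ⊆ powersetCard r (range m) := by
    intro S hS
    rw [mem_union] at hS
    rcases hS with hS | hS
    · exact mem_powersetCard.2 ⟨(hF S hS).2.1, (hF S hS).1⟩
    · rw [mem_powersetCard] at hS ⊢
      exact ⟨hS.1.trans sdiff_subset, hS.2⟩
  have hcard := card_le_card hsub
  rw [card_union_of_disjoint hdisj, card_powersetCard, card_powersetCard,
    card_sdiff_of_subset hB₀r, card_range, hB₀c] at hcard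
  exact hcard

lemma choose_succ_ge {m b : ℕ} (hb : 1 ≤ b) (hbm : b ≤ m + 1) :
    m.choose b + 1 ≤ (m + 1).choose b := by
  obtain ⟨b', rfl⟩ : ∃ b', b = b' + 1 := ⟨b - 1, by omega⟩
  rw [Nat.choose_succ_succ]
  have := Nat.choose_pos (show b' ≤ m by omega)
  simp only [Nat.succ_eq_add_one]
  omega

theorem hiltonAux (n : ℕ) : ∀ m k : ℕ, ∀ X Y : Finset (Finset ℕ),
    mea X + mea Y ≤ m → 1 ≤ k → 2 * k ≤ n →
    (∀ A ∈ X, A.card = k) → (∀ A ∈ X, A ⊆ range n) →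
    (∀ B ∈ Y, B.card = k) → (∀ B ∈ Y, B ⊆ range n) →
    X.Nonempty → Y.Nonempty → Cross X Y →
    X.card + Y.card + (n - k).choose k ≤ n.choose k + 1 := by
  induction n using Nat.strong_induction_on with
  | _ n ihn =>
  intro m
  induction m using Nat.strong_induction_on with
  | _ m ihm =>
  intro k X Y hm hk hnk hXk hXr hYk hYr hXne hYne hC
  classical
  by_cases hstab : ∃ i j : ℕ, i < j ∧ (𝓒 {i} {j} X ≠ X ∨ 𝓒 {i} {j} Y ≠ Y)
  · -- compress and use the inner induction hypothesis
    obtain ⟨i, j, hij, hor⟩ := hstab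
    have hlt : mea (𝓒 {i} {j} X) + mea (𝓒 {i} {j} Y) < mea X + mea Y := by
      rcases hor with h | h
      · exact Nat.add_lt_add_of_lt_of_le (mea_compression_lt hij h) (mea_compression_le hij)
      · exact Nat.add_lt_add_of_le_of_lt (mea_compression_le hij) (mea_compression_lt hij h)
    have hmemfacts : ∀ Z : Finset (Finset ℕ), (∀ A ∈ Z, A.card = k) → (∀ A ∈ Z, A ⊆ range n) →
        (∀ A ∈ 𝓒 {i} {j} Z, A.card = k) ∧ (∀ A ∈ 𝓒 {i} {j} Z, A ⊆ range n) := by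
      intro Z hZk hZr
      constructor
      · intro A hA
        rcases mem_compression.1 hA with ⟨hAZ, -⟩ | ⟨-, B, hB, rfl⟩
        · exact hZk _ hAZ
        · rw [card_compress (by simp)]
          exact hZk _ hB
      · intro A hA
        rcases mem_compression.1 hA with ⟨hAZ, -⟩ | ⟨-, B, hB, rfl⟩
        · exact hZr _ hAZ
        · by_cases hmov : compress {i} {j} B = B
          · rw [hmov]; exact hZr _ hB
          · obtain ⟨hiB, hjB, hform⟩ := compress_moved hmov
            rw [hform]
            intro x hx
            simp only [mem_sdiff, mem_union, mem_singleton] at hx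
            rcases hx.1 with hxB | rfl
            · exact hZr _ hB hxB
            · have : j < n := mem_range.1 (hZr _ hB hjB)
              exact mem_range.2 (by omega)
    obtain ⟨hXk', hXr'⟩ := hmemfacts X hXk hXr
    obtain ⟨hYk', hYr'⟩ := hmemfacts Y hYk hYr
    have hXne' : (𝓒 {i} {j} X).Nonempty := by
      rw [← card_pos, card_compression]; exact card_pos.2 hXne
    have hYne' : (𝓒 {i} {j} Y).Nonempty := by
      rw [← card_pos, card_compression]; exact card_pos.2 hYne
    have hres := ihm (m - 1) (by omega) k (𝓒 {i} {j} X) (𝓒 {i} {j} Y)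
      (by omega) hk hnk hXk' hXr' hYk' hYr' hXne' hYne' (cross_compression hC)
    rwa [card_compression, card_compression] at hres
  · push_neg at hstab
    -- hstab : ∀ i j, i < j → 𝓒 {i} {j} X = X ∧ 𝓒 {i} {j} Y = Y
    by_cases hbase : n = 2 * k
    · -- base case : complement injection
      have hncard : ∀ A ∈ X, (range n \ A).card = k := by
        intro A hA
        rw [card_sdiff_of_subset (hXr A hA), card_range, hXk A hA]
        omega
      have hXcCard : (X.image (fun A => range n \ A)).card = X.card := by
        apply card_image_of_injOn
        intro A hA B hB hAB
        have hAB' : range n \ A = range n \ B := hAB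
        have h1 : range n \ (range n \ A) = range n \ (range n \ B) := by rw [hAB']
        rwa [Finset.sdiff_sdiff_eq_self (hXr A hA), Finset.sdiff_sdiff_eq_self (hXr B hB)] at h1
      have hdisj : Disjoint (X.image (fun A => range n \ A)) Y := by
        rw [disjoint_left]
        intro S hS hSY
        simp only [mem_image] at hS
        obtain ⟨A, hA, rfl⟩ := hS
        obtain ⟨x, hx⟩ := hC A hA _ hSY
        rw [mem_inter, mem_sdiff] at hx
        exact hx.2.2 hx.1
      have hsub : (X.image (fun A => range n \ A)) ∪ Y ⊆ powersetCard k (range n) := by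
        intro S hS
        rw [mem_union] at hS
        rcases hS with hS | hS
        · simp only [mem_image] at hS
          obtain ⟨A, hA, rfl⟩ := hS
          exact mem_powersetCard.2 ⟨sdiff_subset, hncard A hA⟩
        · exact mem_powersetCard.2 ⟨hYr S hS, hYk S hS⟩
      have hcard := card_le_card hsub
      rw [card_union_of_disjoint hdisj, card_powersetCard, card_range, hXcCard] at hcard
      have h1 : (n - k).choose k = 1 := by
        rw [show n - k = k by omega, Nat.choose_self]
      omega
    · -- inductive case on n
      have hn : 2 * k + 1 ≤ n := by omega
      set e := n - 1 with he
      have hen : e < n := by omega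
      have he2k : 2 * k ≤ e := by omega
      -- the split of a family by the top element e
      have hsplit : ∀ Z : Finset (Finset ℕ),
          Z.card = (Z.filter (fun A => e ∉ A)).card
            + ((Z.filter (fun A => e ∈ A)).image (fun A => A.erase e)).card := by
        intro Z
        rw [card_image_of_injOn (fun A hA B hB hAB => by
          rw [mem_coe, mem_filter] at hA hB
          rw [← insert_erase hA.2, ← insert_erase hB.2, hAB])]
        rw [add_comm, card_filter_add_card_filter_not]
      -- nonemptiness of the part avoiding e
      have hbot : ∀ Z : Finset (Finset ℕ), (∀ A ∈ Z, A.card = k) →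
          (∀ A ∈ Z, A ⊆ range n) → Z.Nonempty →
          (∀ i j : ℕ, i < j → 𝓒 {i} {j} Z = Z) →
          (Z.filter (fun A => e ∉ A)).Nonempty := by
        intro Z hZk hZr hZne hZstab
        obtain ⟨A, hA⟩ := hZne
        by_cases heA : e ∈ A
        · have hsd : (range e \ A).Nonempty := by
            rw [← card_pos]
            have h1 := le_card_sdiff A (range e)
            rw [card_range] at h1
            have h2 : A.card = k := hZk A hA
            omega
          obtain ⟨i, hi⟩ := hsd
          rw [mem_sdiff, mem_range] at hi
          have hshift := shift_mem (hZstab i e hi.1) hA heA hi.2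
          refine ⟨(A ∪ {i}) \ {e}, mem_filter.2 ⟨hshift, ?_⟩⟩
          simp
        · exact ⟨A, mem_filter.2 ⟨hA, heA⟩⟩
      have hX0ne := hbot X hXk hXr hXne (fun i j hij => (hstab i j hij).1)
      have hY0ne := hbot Y hYk hYr hYne (fun i j hij => (hstab i j hij).2)
      -- facts about the bottom parts
      have hbotfacts : ∀ Z : Finset (Finset ℕ), (∀ A ∈ Z, A.card = k) →
          (∀ A ∈ Z, A ⊆ range n) →
          (∀ A ∈ Z.filter (fun A => e ∉ A), A.card = k) ∧
          (∀ A ∈ Z.filter (fun A => e ∉ A), A ⊆ range e) := by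
        intro Z hZk hZr
        refine ⟨fun A hA => hZk A (filter_subset _ _ hA), fun A hA x hx => ?_⟩
        rw [mem_filter] at hA
        have h1 := mem_range.1 (hZr A hA.1 hx)
        have h2 : x ≠ e := fun h => hA.2 (h ▸ hx)
        rw [mem_range]
        omega
      obtain ⟨hX0k, hX0r⟩ := hbotfacts X hXk hXr
      obtain ⟨hY0k, hY0r⟩ := hbotfacts Y hYk hYr
      have hC0 : Cross (X.filter (fun A => e ∉ A)) (Y.filter (fun A => e ∉ A)) :=
        fun A hA B hB => hC A (filter_subset _ _ hA) B (filter_subset _ _ hB)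
      have hIH0 := ihn e hen (mea (X.filter (fun A => e ∉ A)) + mea (Y.filter (fun A => e ∉ A)))
        k (X.filter (fun A => e ∉ A)) (Y.filter (fun A => e ∉ A)) le_rfl hk he2k
        hX0k hX0r hY0k hY0r hX0ne hY0ne hC0
      -- facts about the top parts
      have htopfacts : ∀ Z : Finset (Finset ℕ), (∀ A ∈ Z, A.card = k) →
          (∀ A ∈ Z, A ⊆ range n) →
          (∀ S ∈ (Z.filter (fun A => e ∈ A)).image (fun A => A.erase e),
            S.card = k - 1 ∧ S ⊆ range e) := by
        intro Z hZk hZr S hS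
        simp only [mem_image, mem_filter] at hS
        obtain ⟨A, ⟨hA, heA⟩, rfl⟩ := hS
        constructor
        · rw [card_erase_of_mem heA, hZk A hA]
        · intro x hx
          rw [mem_erase] at hx
          have h1 := mem_range.1 (hZr A hA hx.2)
          rw [mem_range]
          omega
      have hX1f := htopfacts X hXk hXr
      have hY1f := htopfacts Y hYk hYr
      -- Pascal identities
      have p1 : n.choose k = e.choose (k - 1) + e.choose k := by
        obtain ⟨k', rfl⟩ : ∃ k', k = k' + 1 := ⟨k - 1, by omega⟩
        rw [show n = e + 1 by omega, Nat.choose_succ_succ e k']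
        simp
      have p2 : (n - k).choose k = (e - k).choose (k - 1) + (e - k).choose k := by
        obtain ⟨k', rfl⟩ : ∃ k', k = k' + 1 := ⟨k - 1, by omega⟩
        rw [show n - (k' + 1) = (e - (k' + 1)) + 1 by omega,
          Nat.choose_succ_succ (e - (k' + 1)) k']
        simp
      by_cases hX1e : ((X.filter (fun A => e ∈ A)).image (fun A => A.erase e)).Nonempty
      · by_cases hY1e : ((Y.filter (fun A => e ∈ A)).image (fun A => A.erase e)).Nonempty
        · -- both top parts nonempty
          have hk2 : 2 ≤ k := by
            by_contra hcon
            have hk1 : k = 1 := by omega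
            obtain ⟨S, hS⟩ := hX1e
            simp only [mem_image, mem_filter] at hS
            obtain ⟨A, ⟨hA, heA⟩, rfl⟩ := hS
            have hA1 : A = {e} := by
              have hc1 := hXk A hA
              rw [hk1] at hc1
              obtain ⟨a, ha⟩ := card_eq_one.1 hc1
              rw [ha] at heA ⊢
              rw [mem_singleton] at heA
              rw [heA]
            obtain ⟨B, hB⟩ := hY0ne
            rw [mem_filter] at hB
            obtain ⟨x, hx⟩ := hC A hA B hB.1
            rw [mem_inter, hA1, mem_singleton] at hx
            exact hB.2 (hx.1 ▸ hx.2)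
          -- cross-intersecting top parts
          have hC1 : Cross ((X.filter (fun A => e ∈ A)).image (fun A => A.erase e))
              ((Y.filter (fun A => e ∈ A)).image (fun A => A.erase e)) := by
            intro S hS T hT
            simp only [mem_image, mem_filter] at hS hT
            obtain ⟨A, ⟨hA, heA⟩, rfl⟩ := hS
            obtain ⟨B, ⟨hB, heB⟩, rfl⟩ := hT
            by_contra hne
            rw [not_nonempty_iff_eq_empty] at hne
            have hABc : (A ∪ B).card + (A ∩ B).card = A.card + B.card :=
              card_union_add_card_inter A B
            have hcappos : 1 ≤ (A ∩ B).card := card_pos.2 ⟨e, mem_inter.2 ⟨heA, heB⟩⟩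
            have hAc := hXk A hA
            have hBc := hYk B hB
            have hsd : (range e \ (A ∪ B)).Nonempty := by
              rw [← card_pos]
              have h1 := le_card_sdiff (A ∪ B) (range e)
              rw [card_range] at h1
              omega
            obtain ⟨i, hi⟩ := hsd
            rw [mem_sdiff, mem_range, mem_union] at hi
            have hiA : i ∉ A := fun h => hi.2 (Or.inl h)
            have hiB : i ∉ B := fun h => hi.2 (Or.inr h)
            have hshift := shift_mem (hstab i e hi.1).1 hA heA hiA
            obtain ⟨x, hx⟩ := hC _ hshift B hB
            rw [mem_inter] at hx
            have hx1 := hx.1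
            simp only [mem_sdiff, mem_union, mem_singleton] at hx1
            rcases hx1.1 with hxA | rfl
            · have hmem : x ∈ A.erase e ∩ B.erase e :=
                mem_inter.2 ⟨mem_erase.2 ⟨hx1.2, hxA⟩, mem_erase.2 ⟨hx1.2, hx.2⟩⟩
              rw [hne] at hmem
              exact notMem_empty x hmem
            · exact hiB hx.2
          have hIH1 := ihn e hen
            (mea ((X.filter (fun A => e ∈ A)).image (fun A => A.erase e))
              + mea ((Y.filter (fun A => e ∈ A)).image (fun A => A.erase e)))
            (k - 1) _ _ le_rfl (by omega) (by omega)
            (fun S hS => (hX1f S hS).1) (fun S hS => (hX1f S hS).2.trans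
              (range_subset_range.2 (by omega)))
            (fun S hS => (hY1f S hS).1) (fun S hS => (hY1f S hS).2.trans
              (range_subset_range.2 (by omega)))
            hX1e hY1e hC1
          -- hIH1 : X1.card + Y1.card + (e - (k-1)).choose (k-1) ≤ e.choose (k-1) + 1
          have p3 : (e - k).choose (k - 1) + 1 ≤ (e - (k - 1)).choose (k - 1) := by
            rw [show e - (k - 1) = (e - k) + 1 by omega]
            exact choose_succ_ge (by omega) (by omega)
          have hXs := hsplit X
          have hYs := hsplit Y
          omega
        · -- Y has no set containing e
          have hYe : ∀ B ∈ Y, e ∉ B := by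
            intro B hB heB
            exact hY1e ⟨B.erase e, mem_image.2 ⟨B, mem_filter.2 ⟨hB, heB⟩, rfl⟩⟩
          obtain ⟨B₀, hB₀⟩ := hYne
          have hB₀r : B₀ ⊆ range e := by
            intro x hx
            have h1 := mem_range.1 (hYr B₀ hB₀ hx)
            have h2 : x ≠ e := fun h => hYe B₀ hB₀ (h ▸ hx)
            rw [mem_range]; omega
          have hmeet : ∀ S ∈ (X.filter (fun A => e ∈ A)).image (fun A => A.erase e),
              S.card = k - 1 ∧ S ⊆ range e ∧ (S ∩ B₀).Nonempty := by
            intro S hS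
            refine ⟨(hX1f S hS).1, (hX1f S hS).2, ?_⟩
            simp only [mem_image, mem_filter] at hS
            obtain ⟨A, ⟨hA, heA⟩, rfl⟩ := hS
            obtain ⟨x, hx⟩ := hC A hA B₀ hB₀
            rw [mem_inter] at hx
            have hxe : x ≠ e := fun h => hYe B₀ hB₀ (h ▸ hx.2)
            exact ⟨x, mem_inter.2 ⟨mem_erase.2 ⟨hxe, hx.1⟩, hx.2⟩⟩
          have hcount := card_meet hB₀r (hYk B₀ hB₀) hmeet
          have hXs := hsplit X
          have hYs := hsplit Y
          have hY1z : ((Y.filter (fun A => e ∈ A)).image (fun A => A.erase e)).card = 0 := by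
            rw [card_eq_zero, ← not_nonempty_iff_eq_empty]
            exact hY1e
          omega
      · by_cases hY1e : ((Y.filter (fun A => e ∈ A)).image (fun A => A.erase e)).Nonempty
        · -- X has no set containing e (symmetric)
          have hXe : ∀ B ∈ X, e ∉ B := by
            intro B hB heB
            exact hX1e ⟨B.erase e, mem_image.2 ⟨B, mem_filter.2 ⟨hB, heB⟩, rfl⟩⟩
          obtain ⟨A₀, hA₀⟩ := hXne
          have hA₀r : A₀ ⊆ range e := by
            intro x hx
            have h1 := mem_range.1 (hXr A₀ hA₀ hx)
            have h2 : x ≠ e := fun h => hXe A₀ hA₀ (h ▸ hx)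
            rw [mem_range]; omega
          have hmeet : ∀ S ∈ (Y.filter (fun A => e ∈ A)).image (fun A => A.erase e),
              S.card = k - 1 ∧ S ⊆ range e ∧ (S ∩ A₀).Nonempty := by
            intro S hS
            refine ⟨(hY1f S hS).1, (hY1f S hS).2, ?_⟩
            simp only [mem_image, mem_filter] at hS
            obtain ⟨B, ⟨hB, heB⟩, rfl⟩ := hS
            obtain ⟨x, hx⟩ := hC A₀ hA₀ B hB
            rw [mem_inter] at hx
            have hxe : x ≠ e := fun h => hXe A₀ hA₀ (h ▸ hx.1)
            exact ⟨x, mem_inter.2 ⟨mem_erase.2 ⟨hxe, hx.2⟩, hx.1⟩⟩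
          have hcount := card_meet hA₀r (hXk A₀ hA₀) hmeet
          have hXs := hsplit X
          have hYs := hsplit Y
          have hX1z : ((X.filter (fun A => e ∈ A)).image (fun A => A.erase e)).card = 0 := by
            rw [card_eq_zero, ← not_nonempty_iff_eq_empty]
            exact hX1e
          omega
        · -- neither contains e
          have hXs := hsplit X
          have hYs := hsplit Y
          have hX1z : ((X.filter (fun A => e ∈ A)).image (fun A => A.erase e)).card = 0 := by
            rw [card_eq_zero, ← not_nonempty_iff_eq_empty]
            exact hX1e
          have hY1z : ((Y.filter (fun A => e ∈ A)).image (fun A => A.erase e)).card = 0 := by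
            rw [card_eq_zero, ← not_nonempty_iff_eq_empty]
            exact hY1e
          have p5 : (e - k).choose (k - 1) ≤ e.choose (k - 1) :=
            Nat.choose_le_choose (k - 1) (by omega)
          omega

end Hilton

/-- (Hilton–Milner type theorem.) Let `n ≥ 2k` and let `X, Y` be a
cross-intersecting pair of (nonempty) families of `k`-element subsets of an
`n`-element set. Then `|X| + |Y| ≤ C(n,k) - C(n-k,k) + 1`. -/
theorem stmt_9 (n k : ℕ) (hk : 1 ≤ k) (hnk : 2 * k ≤ n)
    (X Y : Finset (Finset (Fin n)))
    (hXk : ∀ A ∈ X, A.card = k) (hYk : ∀ B ∈ Y, B.card = k)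
    (hXne : X.Nonempty) (hYne : Y.Nonempty)
    (hcross : ∀ A ∈ X, ∀ B ∈ Y, (A ∩ B).Nonempty) :
    X.card + Y.card ≤ n.choose k - (n - k).choose k + 1 := by
  classical
  set f : Finset (Fin n) → Finset ℕ := fun A => A.image Fin.val with hf
  have hfinj : Function.Injective f :=
    fun A B h => Finset.image_injective Fin.val_injective h
  have hfcard : ∀ A : Finset (Fin n), (f A).card = A.card :=
    fun A => Finset.card_image_of_injective A Fin.val_injective
  have hfrange : ∀ A : Finset (Fin n), f A ⊆ Finset.range n := by
    intro A x hx
    simp only [hf, Finset.mem_image] at hx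
    obtain ⟨y, -, rfl⟩ := hx
    exact Finset.mem_range.2 y.isLt
  have hXcard : (X.image f).card = X.card := Finset.card_image_of_injective X hfinj
  have hYcard : (Y.image f).card = Y.card := Finset.card_image_of_injective Y hfinj
  have key := Hilton.hiltonAux n (Hilton.mea (X.image f) + Hilton.mea (Y.image f)) k
    (X.image f) (Y.image f) le_rfl hk hnk
    (by intro A hA; obtain ⟨B, hB, rfl⟩ := Finset.mem_image.1 hA; rw [hfcard]; exact hXk B hB)
    (by intro A hA; obtain ⟨B, hB, rfl⟩ := Finset.mem_image.1 hA; exact hfrange B)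
    (by intro A hA; obtain ⟨B, hB, rfl⟩ := Finset.mem_image.1 hA; rw [hfcard]; exact hYk B hB)
    (by intro A hA; obtain ⟨B, hB, rfl⟩ := Finset.mem_image.1 hA; exact hfrange B)
    (hXne.image f) (hYne.image f)
    (by
      intro A' hA' B' hB'
      obtain ⟨A, hA, rfl⟩ := Finset.mem_image.1 hA'
      obtain ⟨B, hB, rfl⟩ := Finset.mem_image.1 hB'
      obtain ⟨x, hx⟩ := hcross A hA B hB
      rw [Finset.mem_inter] at hx
      exact ⟨x.val, Finset.mem_inter.2
        ⟨Finset.mem_image_of_mem _ hx.1, Finset.mem_image_of_mem _ hx.2⟩⟩)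
  rw [hXcard, hYcard] at key
  have hle : (n - k).choose k ≤ n.choose k := Nat.choose_le_choose k (by omega)
  omega
end

section
/- Let n > 2k and s > n/k, and let X₁, …, X_s be families of k-element subsets of an n-element set such that A ∩ B ≠ ∅ whenever A ∈ Xᵢ, B ∈ Xⱼ with i ≠ j. Then Σ_{i=1}^{s} |Xᵢ| ≤ s·C(n-1, k-1). -/
/-!
Katona's circle method. Arrange the ground set on a cycle by a bijection `σ : ZMod n ≃ Fin n`
and call the images of the intervals `{t, …, t + k - 1}` arcs. Let `S` be the set of arcs lying in
some family and `M ⊆ S` those meeting every arc of `S`. An arc outside `M` lies in at most one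
family. If `M` contains an arc `m`, the arcs meeting `m` other than `m` split into `k - 1` pairs
of disjoint arcs, and each pair contributes at most `2` to `|S| + |M|`, so `|S| + |M| ≤ 2k`.
Hence the families contain at most `s|M| + (|S| - |M|) ≤ ks` arcs in total (using `n ≤ ks`
when `M = ∅`). Each `k`-set is the arc of `n · k! (n - k)!` pairs `(σ, t)`, so summing over all `n!`
bijections gives `Σ |Xᵢ| · n · k! (n - k)! ≤ n! · ks = s · C(n - 1, k - 1) · n · k! (n - k)!`.
-/

open Finset
open scoped Nat

theorem card_le_one_add_sum_card_inter {α ι : Type*} [DecidableEq α] {S : Finset α} {m : α}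
    {I : Finset ι} {P : ι → Finset α} (h : S ⊆ insert m (I.biUnion P)) :
    #S ≤ 1 + ∑ i ∈ I, #(S ∩ P i) := by
  have hS : S ⊆ insert m (I.biUnion fun i => S ∩ P i) := by
    intro t ht
    have := h ht
    simp only [mem_insert, mem_biUnion, mem_inter] at this ⊢
    tauto
  calc #S ≤ #(I.biUnion fun i => S ∩ P i) + 1 := (card_le_card hS).trans (card_insert_le _ _)
    _ ≤ 1 + ∑ i ∈ I, #(S ∩ P i) := by rw [add_comm]; grw [card_biUnion_le]

section Counting

variable {α β : Type*}

def equivSubtypeIffEquivProd (p : α → Prop) (q : β → Prop) [DecidablePred p]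
    [DecidablePred q] :
    {σ : α ≃ β // ∀ x, p x ↔ q (σ x)} ≃
      ({x // p x} ≃ {y // q y}) × ({x // ¬p x} ≃ {y // ¬q y}) where
  toFun σ := (σ.1.subtypeEquiv σ.2, σ.1.subtypeEquiv fun x => not_congr (σ.2 x))
  invFun ef := ⟨(Equiv.sumCompl p).symm.trans ((ef.1.sumCongr ef.2).trans (Equiv.sumCompl q)),
    fun x => by
      by_cases hx : p x
      · simp [Equiv.sumCompl_symm_apply_of_pos hx, hx, (ef.1 ⟨x, hx⟩).2]
      · simp [Equiv.sumCompl_symm_apply_of_neg hx, hx, (ef.2 ⟨x, hx⟩).2]⟩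
  left_inv σ := by
    ext x
    by_cases hx : p x
    · simp [Equiv.sumCompl_symm_apply_of_pos hx]
    · simp [Equiv.sumCompl_symm_apply_of_neg hx]
  right_inv ef := by
    ext x
    · simp [Equiv.sumCompl_symm_apply_of_pos x.2]
    · simp [Equiv.sumCompl_symm_apply_of_neg x.2]

variable [Fintype α] [Fintype β] [DecidableEq α] [DecidableEq β]

theorem card_filter_image_eq (hαβ : Fintype.card α = Fintype.card β) {B : Finset α}
    {A : Finset β} (hBA : #B = #A) :
    #{σ : α ≃ β | B.image σ = A} = (#A)! * (Fintype.card β - #A)! := by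
  have hiff (σ : α ≃ β) : B.image σ = A ↔ ∀ x, x ∈ B ↔ σ x ∈ A := by
    simp only [Finset.ext_iff, σ.surjective.forall, σ.injective.mem_finset_image]
  simp_rw [hiff]
  rw [← Fintype.card_subtype, Fintype.card_congr (equivSubtypeIffEquivProd _ _),
    Fintype.card_prod, Fintype.card_equiv (Fintype.equivOfCardEq _),
    Fintype.card_equiv (Fintype.equivOfCardEq _)]
  · simp [hBA, hαβ]
  · simp [Fintype.card_subtype_compl, hαβ, hBA]
  · simp [hBA]

theorem card_filter_image_mem (hαβ : Fintype.card α = Fintype.card β) (B : Finset α)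
    (F : Finset (Finset β)) (hF : ∀ A ∈ F, #A = #B) :
    #{σ : α ≃ β | B.image σ ∈ F} = #F * ((#B)! * (Fintype.card β - #B)!) := by
  rw [card_eq_sum_card_fiberwise (f := fun σ : α ≃ β => B.image σ) (t := F)
    fun σ hσ => by simpa using hσ]
  refine sum_const_nat fun A hA => ?_
  rw [filter_filter]
  have hfib (σ : α ≃ β) : B.image σ ∈ F ∧ B.image σ = A ↔ B.image σ = A :=
    and_iff_right_of_imp (· ▸ hA)
  simp only [hfib]
  rw [card_filter_image_eq hαβ (hF A hA).symm, hF A hA]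

end Counting

def arc (n k : ℕ) (t : ZMod n) : Finset (ZMod n) :=
  (range k).image fun j : ℕ => t + j

section Arcs

variable {n k : ℕ}

theorem card_arc [NeZero n] (hkn : k ≤ n) (t : ZMod n) : #(arc n k t) = k := by
  rw [arc, card_image_of_injOn, card_range]
  intro a ha b hb hab
  simp only [coe_range, Set.mem_Iio] at ha hb
  have := (ZMod.natCast_eq_natCast_iff' a b n).mp (add_left_cancel hab)
  rwa [Nat.mod_eq_of_lt (by omega), Nat.mod_eq_of_lt (by omega)] at this

theorem arc_inter_nonempty_iff {t u : ZMod n} :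
    (arc n k t ∩ arc n k u).Nonempty ↔ ∃ a < k, ∃ b < k, t + a = u + b := by
  simp only [Finset.Nonempty, arc, mem_inter, mem_image, mem_range]
  constructor
  · rintro ⟨_, ⟨a, ha, rfl⟩, b, hb, hab⟩
    exact ⟨a, ha, b, hb, hab.symm⟩
  · rintro ⟨a, ha, b, hb, hab⟩
    exact ⟨_, ⟨a, ha, rfl⟩, b, hb, hab.symm⟩

theorem disjoint_arc_add_self (h2k : 2 * k ≤ n) (t : ZMod n) :
    Disjoint (arc n k (t + k)) (arc n k t) := by
  rw [disjoint_iff_inter_eq_empty, ← not_nonempty_iff_eq_empty, arc_inter_nonempty_iff]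
  rintro ⟨a, ha, b, hb, hab⟩
  have : ((k + a : ℕ) : ZMod n) = b := by
    push_cast
    linear_combination hab
  rw [ZMod.natCast_eq_natCast_iff', Nat.mod_eq_of_lt (by omega), Nat.mod_eq_of_lt (by omega)]
    at this
  omega

/-- The arcs starting at `m + j` and ending just before `m + j`; for `0 < j < k` both meet
`arc n k m`. -/
def arcPair (n k : ℕ) (m : ZMod n) (j : ℕ) : Finset (ZMod n) :=
  {m + j, m + j - k}

theorem mem_insert_biUnion_arcPair {t m : ZMod n} (h : (arc n k t ∩ arc n k m).Nonempty) :
    t ∈ insert m ((Ico 1 k).biUnion (arcPair n k m)) := by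
  obtain ⟨a, ha, b, hb, hab⟩ := arc_inter_nonempty_iff.mp h
  simp only [mem_insert, mem_biUnion, mem_Ico, arcPair, mem_singleton]
  rcases lt_trichotomy a b with hlt | rfl | hgt
  · refine Or.inr ⟨b - a, by omega, Or.inl ?_⟩
    push_cast [hlt.le]
    linear_combination hab
  · exact Or.inl (add_right_cancel hab)
  · refine Or.inr ⟨k - (a - b), by omega, Or.inr ?_⟩
    push_cast [hgt.le, show a - b ≤ k by omega]
    linear_combination hab

theorem card_inter_pair_add_le_two {S M : Finset (ZMod n)} (hMS : M ⊆ S)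
    (hmeet : ∀ t ∈ S, ∀ u ∈ M, (arc n k t ∩ arc n k u).Nonempty) {x y : ZMod n}
    (hxy : Disjoint (arc n k x) (arc n k y)) :
    #(S ∩ {x, y}) + #(M ∩ {x, y}) ≤ 2 := by
  have hMS' : #(M ∩ {x, y}) ≤ #(S ∩ {x, y}) := card_le_card (inter_subset_inter_right hMS)
  by_cases hS : x ∈ S ∧ y ∈ S
  · have hM : M ∩ {x, y} = ∅ := by
      ext u
      simp only [mem_inter, mem_insert, mem_singleton, notMem_empty, iff_false, not_and]
      rintro hu (rfl | rfl)
      · exact not_disjoint_iff_nonempty_inter.mpr (hmeet y hS.2 u hu) hxy.symm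
      · exact not_disjoint_iff_nonempty_inter.mpr (hmeet x hS.1 u hu) hxy
    have : #(S ∩ {x, y}) ≤ 2 := (card_le_card inter_subset_right).trans card_le_two
    rw [hM, card_empty]
    omega
  · have : #(S ∩ {x, y}) ≤ 1 := by
      refine card_le_one.mpr fun a ha b hb => ?_
      simp only [mem_inter, mem_insert, mem_singleton] at ha hb
      rcases ha with ⟨ha, rfl | rfl⟩ <;> rcases hb with ⟨hb, rfl | rfl⟩ <;> tauto
    omega

theorem card_add_card_le_of_inter_nonempty (h2k : 2 * k ≤ n) {S M : Finset (ZMod n)}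
    (hMS : M ⊆ S) {m : ZMod n} (hm : m ∈ M)
    (hmeet : ∀ t ∈ S, ∀ u ∈ M, (arc n k t ∩ arc n k u).Nonempty) :
    #S + #M ≤ 2 * k := by
  have hk : 0 < k := by
    obtain ⟨a, ha, -⟩ := arc_inter_nonempty_iff.mp (hmeet m (hMS hm) m hm)
    omega
  have hcover : ∀ T ⊆ S, #T ≤ 1 + ∑ j ∈ Ico 1 k, #(T ∩ arcPair n k m j) := fun T hT =>
    card_le_one_add_sum_card_inter fun t ht => mem_insert_biUnion_arcPair (hmeet t (hT ht) m hm)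
  have hpair (j : ℕ) : #(S ∩ arcPair n k m j) + #(M ∩ arcPair n k m j) ≤ 2 := by
    refine card_inter_pair_add_le_two hMS hmeet ?_
    simpa using disjoint_arc_add_self h2k (m + j - k)
  calc #S + #M ≤ (1 + ∑ j ∈ Ico 1 k, #(S ∩ arcPair n k m j))
        + (1 + ∑ j ∈ Ico 1 k, #(M ∩ arcPair n k m j)) :=
          Nat.add_le_add (hcover S subset_rfl) (hcover M hMS)
    _ = 2 + ∑ j ∈ Ico 1 k, (#(S ∩ arcPair n k m j) + #(M ∩ arcPair n k m j)) := by
      rw [sum_add_distrib]; ring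
    _ ≤ 2 + ∑ j ∈ Ico 1 k, 2 := by grw [sum_le_sum fun j _ => hpair j]
    _ = 2 * k := by rw [sum_const, Nat.card_Ico, smul_eq_mul]; omega

theorem sum_card_le_of_crossIntersecting_arcs [NeZero n] {ι : Type*} [Fintype ι]
    (h2k : 2 * k ≤ n) (hι : 2 ≤ Fintype.card ι) (hn : n ≤ k * Fintype.card ι)
    (Y : ι → Finset (ZMod n))
    (hY : ∀ i j, i ≠ j → ∀ t ∈ Y i, ∀ u ∈ Y j, (arc n k t ∩ arc n k u).Nonempty) :
    ∑ i, #(Y i) ≤ k * Fintype.card ι := by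
  classical
  set s := Fintype.card ι
  set S := univ.biUnion Y
  set M := {t ∈ S | ∀ u ∈ S, (arc n k t ∩ arc n k u).Nonempty}
  set c : ZMod n → ℕ := fun t => #{i | t ∈ Y i}
  have hMS : M ⊆ S := filter_subset _ _
  have hsum : ∑ i, #(Y i) = ∑ t ∈ S, c t := by
    have := sum_card_bipartiteAbove_eq_sum_card_bipartiteBelow (fun i t => t ∈ Y i)
      (s := univ) (t := univ)
    simp only [bipartiteAbove, bipartiteBelow, filter_mem_eq_inter, univ_inter] at this
    rw [this]
    refine (sum_subset (subset_univ S) fun t _ ht => ?_).symm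
    simp_all [S]
  have hcS : ∀ t ∈ S \ M, c t ≤ 1 := by
    intro t ht
    obtain ⟨u, hu, htu⟩ : ∃ u ∈ S, ¬(arc n k t ∩ arc n k u).Nonempty := by
      simpa [M, (mem_sdiff.mp ht).1] using (mem_sdiff.mp ht).2
    obtain ⟨l, -, hul⟩ := mem_biUnion.mp hu
    refine (card_le_card (t := {l}) fun i hi => ?_).trans (card_singleton l).le
    simp only [mem_filter, mem_univ, true_and, mem_singleton] at hi ⊢
    by_contra hil
    exact htu (hY i l hil t hi u hul)
  have hbound : ∑ t ∈ S, c t ≤ s * #M + #(S \ M) := by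
    rw [← sum_sdiff hMS, add_comm]
    gcongr
    · exact (sum_le_card_nsmul _ _ _ fun t _ => card_le_univ _).trans_eq
        (by rw [smul_eq_mul, mul_comm])
    · exact (sum_le_card_nsmul _ _ _ hcS).trans_eq (by simp)
  rw [hsum]
  rw [card_sdiff_of_subset hMS] at hbound
  rcases M.eq_empty_or_nonempty with hM | ⟨m, hm⟩
  · have : #S ≤ n := (card_le_univ S).trans_eq (ZMod.card n)
    simp only [hM, card_empty] at hbound
    omega
  · have hpair := card_add_card_le_of_inter_nonempty h2k hMS hm
      fun t ht u hu => inter_comm (arc n k t) _ ▸ (mem_filter.mp hu).2 t ht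
    have hMk : #M ≤ k := by have := card_le_card hMS; omega
    calc ∑ t ∈ S, c t ≤ s * #M + 2 * (k - #M) := by omega
      _ ≤ s * #M + s * (k - #M) := by gcongr
      _ = k * s := by rw [← mul_add, Nat.add_sub_cancel' hMk, mul_comm]

theorem sum_card_filter_arc_image_mem [NeZero n] {β : Type*} [Fintype β]
    [DecidableEq β] (hβ : Fintype.card β = n) (hkn : k ≤ n) (F : Finset (Finset β))
    (hF : ∀ A ∈ F, #A = k) :
    ∑ σ : ZMod n ≃ β, #{t | (arc n k t).image σ ∈ F} = n * (#F * (k ! * (n - k)!)) := by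
  have := sum_card_bipartiteAbove_eq_sum_card_bipartiteBelow
    (fun (σ : ZMod n ≃ β) t => (arc n k t).image σ ∈ F) (s := univ) (t := univ)
  simp only [bipartiteAbove, bipartiteBelow] at this
  rw [this, sum_const_nat fun t _ => (card_filter_image_mem (by simp [hβ]) (arc n k t) F
    fun A hA => by rw [hF A hA, card_arc hkn]).trans (by rw [card_arc hkn, hβ]), card_univ,
    ZMod.card]

end Arcs

theorem choose_pred_mul_factorial_mul_factorial {n k : ℕ} (hk : 0 < k) (hkn : k ≤ n) :
    n * (n - 1).choose (k - 1) * (k ! * (n - k)!) = k * n ! := by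
  obtain ⟨n, rfl⟩ : ∃ m, n = m + 1 := ⟨n - 1, by omega⟩
  obtain ⟨k, rfl⟩ : ∃ m, k = m + 1 := ⟨k - 1, by omega⟩
  simp only [Nat.add_sub_cancel]
  rw [Nat.add_one_mul_choose_eq, ← Nat.choose_mul_factorial_mul_factorial hkn]
  ring

/-- (Frankl's theorem.) Let `n > 2k` and `s > n/k`, and let `X₁, …, X_s` be
families of `k`-element subsets of an `n`-element set such that `A ∩ B ≠ ∅`
whenever `A ∈ Xᵢ`, `B ∈ Xⱼ` with `i ≠ j`. Then `Σᵢ |Xᵢ| ≤ s·C(n-1, k-1)`. -/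
theorem stmt_10 (n k s : ℕ) (hk : 1 ≤ k) (hn : 2 * k < n)
    (hs : (n : ℝ) / (k : ℝ) < (s : ℝ))
    (X : Fin s → Finset (Finset (Fin n)))
    (hXk : ∀ i, ∀ A ∈ X i, A.card = k)
    (hcross : ∀ i j : Fin s, i ≠ j → ∀ A ∈ X i, ∀ B ∈ X j, (A ∩ B).Nonempty) :
    ∑ i, (X i).card ≤ s * (n - 1).choose (k - 1) := by
  have : NeZero n := ⟨by omega⟩
  have hks : n < k * s := by
    have := (div_lt_iff₀ (by exact_mod_cast hk : (0 : ℝ) < k)).mp hs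
    rw [mul_comm] at this
    exact_mod_cast this
  have hs2 : 2 ≤ s := by nlinarith
  set Y : (ZMod n ≃ Fin n) → Fin s → Finset (ZMod n) :=
    fun σ i => {t | (arc n k t).image σ ∈ X i}
  have hcircle (σ : ZMod n ≃ Fin n) : ∑ i, #(Y σ i) ≤ k * s := by
    have hY : ∀ i j, i ≠ j → ∀ t ∈ Y σ i, ∀ u ∈ Y σ j,
        (arc n k t ∩ arc n k u).Nonempty := by
      intro i j hij t ht u hu
      simp only [Y, mem_filter, mem_univ, true_and] at ht hu
      rw [← image_nonempty (f := σ), image_inter _ _ σ.injective]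
      exact hcross i j hij _ ht _ hu
    simpa using
      sum_card_le_of_crossIntersecting_arcs (by omega) (by simpa) (by simpa using hks.le) (Y σ) hY
  set D := n * (k ! * (n - k)!)
  have hcount : ∑ σ, ∑ i, #(Y σ i) = (∑ i, #(X i)) * D := by
    rw [sum_comm, sum_mul]
    refine sum_congr rfl fun i _ => ?_
    rw [sum_card_filter_arc_image_mem (Fintype.card_fin n) (by omega) _ (hXk i)]
    ring
  have key : (∑ i, #(X i)) * D ≤ (s * (n - 1).choose (k - 1)) * D :=
    calc _ = ∑ σ, ∑ i, #(Y σ i) := hcount.symm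
      _ ≤ n ! * (k * s) := by
        grw [sum_le_card_nsmul _ _ _ fun σ _ => hcircle σ, Finset.card_univ,
          Fintype.card_equiv (Fintype.equivOfCardEq (by simp)), ZMod.card, smul_eq_mul]
      _ = s * (k * n !) := by ring
      _ = _ := by rw [← choose_pred_mul_factorial_mul_factorial hk (by omega)]; ring
  exact le_of_mul_le_mul_right key (Nat.mul_pos (by omega) (by positivity))
end

section
/- Let x = (x₁,…,x_m) ∈ (ℝⁿ)^m where block x_j has one entry equal to k₀⁽ʲ⁾/n − (i−1) selected and the rest fixed, and y ∈ H̃(n,m) with y_j = e_{q_j}. Then d(x,y)² = Σ_{j=1}^{m} (1 − n − 2k₀⁽ʲ⁾ − (k₀⁽ʲ⁾)²/n + Σ_{i=1}^{t_j} i²·k_i⁽ʲ⁾ + 2Σ_{i=1}^{t_j} i·l_i⁽ʲ⁾), where l_i⁽ʲ⁾ ∈ {0,1} indicates whether the q_j-th entry of x_j equals k₀⁽ʲ⁾/n − i + 1. -/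
open Finset

lemma block_eq (n t : ℕ) (hn : 0 < n) (k : ℕ → ℕ) (k0 : ℕ)
    (x : Fin n → ℝ) (q : Fin n)
    (hcount : ∀ i ∈ Finset.Icc 1 t,
      (Finset.univ.filter
        (fun p : Fin n => x p = (k0 : ℝ) / (n : ℝ) - (i : ℝ) + 1)).card = k i)
    (hsum : ∑ i ∈ Finset.Icc 1 t, k i = n)
    (hk0 : k0 = 1 + ∑ i ∈ Finset.Icc 1 t, (i - 1) * k i) :
    ∑ p, (x p - (if p = q then (1 : ℝ) else 0)) ^ 2
      = 1 - (n : ℝ) - 2 * (k0 : ℝ) - (k0 : ℝ) ^ 2 / (n : ℝ)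
          + (∑ i ∈ Finset.Icc 1 t, (i : ℝ) ^ 2 * (k i : ℝ))
          + 2 * ∑ i ∈ Finset.Icc 1 t, (i : ℝ) *
              (if x q = (k0 : ℝ) / (n : ℝ) - (i : ℝ) + 1 then 1 else 0) := by
  have hn' : (n : ℝ) ≠ 0 := Nat.cast_ne_zero.mpr hn.ne'
  set S := Finset.Icc 1 t with hS
  set c : ℕ → ℝ := fun i => (k0 : ℝ) / n - i + 1 with hc
  set A : ℕ → Finset (Fin n) := fun i => Finset.univ.filter (fun p => x p = c i) with hA
  have hcinj : ∀ i i' : ℕ, c i = c i' → i = i' := by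
    intro i i' h
    have : (i : ℝ) = i' := by simp only [hc] at h; linarith
    exact_mod_cast this
  have hdisj : ∀ i ∈ S, ∀ i' ∈ S, i ≠ i' → Disjoint (A i) (A i') := by
    intro i _ i' _ hne
    rw [Finset.disjoint_left]
    intro p hp hp'
    simp only [hA, Finset.mem_filter] at hp hp'
    exact hne (hcinj _ _ (hp.2.symm.trans hp'.2))
  have hcover : S.biUnion A = Finset.univ := by
    apply Finset.eq_of_subset_of_card_le (Finset.subset_univ _)
    rw [Finset.card_biUnion hdisj, Finset.card_univ, Fintype.card_fin]
    have : ∀ i ∈ S, (A i).card = k i := hcount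
    rw [Finset.sum_congr rfl this, hsum]
  -- sums of functions of x over univ
  have hsumfun : ∀ f : ℝ → ℝ, ∑ p, f (x p) = ∑ i ∈ S, (k i : ℝ) * f (c i) := by
    intro f
    rw [← hcover, Finset.sum_biUnion hdisj]
    apply Finset.sum_congr rfl
    intro i hi
    have h1 : ∀ p ∈ A i, f (x p) = f (c i) := by
      intro p hp
      simp only [hA, Finset.mem_filter] at hp
      rw [hp.2]
    rw [Finset.sum_congr rfl h1, Finset.sum_const, hcount i hi, nsmul_eq_mul]
  -- x q equals some c i0
  have hq : q ∈ S.biUnion A := by rw [hcover]; exact Finset.mem_univ q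
  obtain ⟨i0, hi0S, hi0⟩ := Finset.mem_biUnion.mp hq
  simp only [hA, Finset.mem_filter] at hi0
  have hxq : x q = c i0 := hi0.2
  -- the l-sum
  have hlsum : ∑ i ∈ S, (i : ℝ) * (if x q = c i then 1 else 0) = i0 := by
    rw [Finset.sum_eq_single i0]
    · rw [if_pos hxq, mul_one]
    · intro i _ hne
      rw [if_neg, mul_zero]
      intro h
      exact hne (hcinj _ _ (hxq.symm.trans h)).symm
    · intro h; exact absurd hi0S h
  -- expand the square
  have expand : ∑ p, (x p - (if p = q then (1:ℝ) else 0)) ^ 2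
      = (∑ p, (x p) ^ 2) - 2 * x q + 1 := by
    have h1 : ∀ p : Fin n, (x p - (if p = q then (1:ℝ) else 0)) ^ 2
        = (x p) ^ 2 - 2 * (if p = q then x p else 0) + (if p = q then 1 else 0) := by
      intro p; by_cases h : p = q
      · simp [h]; ring
      · simp [h]
    simp_rw [h1]
    rw [Finset.sum_add_distrib, Finset.sum_sub_distrib, ← Finset.mul_sum]
    simp [Finset.sum_ite_eq']
  -- sum of squares
  have hsq : ∑ p, (x p) ^ 2 = ∑ i ∈ S, (k i : ℝ) * (c i) ^ 2 := hsumfun (fun y => y ^ 2)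
  -- cast equations
  have hsumR : ∑ i ∈ S, (k i : ℝ) = n := by exact_mod_cast hsum
  have hk0R : (k0 : ℝ) = 1 + ∑ i ∈ S, ((i : ℝ) - 1) * k i := by
    have : ∑ i ∈ S, ((i : ℝ) - 1) * (k i : ℝ)
        = ((∑ i ∈ S, (i - 1) * k i : ℕ) : ℝ) := by
      rw [Nat.cast_sum]
      apply Finset.sum_congr rfl
      intro i hi
      have h1 : 1 ≤ i := (Finset.mem_Icc.mp hi).1
      rw [Nat.cast_mul, Nat.cast_sub h1, Nat.cast_one]
    rw [this]; exact_mod_cast hk0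
  have ha : ∑ i ∈ S, (i : ℝ) * k i = (k0 : ℝ) - 1 + n := by
    have h2 : ∑ i ∈ S, ((i : ℝ) - 1) * k i
        = (∑ i ∈ S, (i : ℝ) * k i) - ∑ i ∈ S, (k i : ℝ) := by
      rw [← Finset.sum_sub_distrib]
      apply Finset.sum_congr rfl; intro i _; ring
    rw [h2, hsumR] at hk0R
    linarith
  -- expand sum of k i * c i ^ 2
  have hsq2 : ∑ i ∈ S, (k i : ℝ) * (c i) ^ 2
      = ((k0:ℝ)/n + 1)^2 * (∑ i ∈ S, (k i : ℝ))
        - 2 * ((k0:ℝ)/n + 1) * (∑ i ∈ S, (i : ℝ) * k i)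
        + ∑ i ∈ S, (i : ℝ)^2 * k i := by
    rw [Finset.mul_sum, Finset.mul_sum, ← Finset.sum_sub_distrib, ← Finset.sum_add_distrib]
    apply Finset.sum_congr rfl
    intro i _
    simp only [hc]; ring
  rw [expand, hsq, hsq2, hsumR, ha, hlsum, hxq]
  simp only [hc]
  field_simp
  ring

/-- The squared distance formula: for `x ∈ ℝ^{mn}` whose `j`-th block has
`k_i⁽ʲ⁾` entries equal to `k₀⁽ʲ⁾/n - i + 1` (for `i = 1,…,t_j`, with
`Σᵢ k_i⁽ʲ⁾ = n` and `k₀⁽ʲ⁾ = 1 + Σᵢ (i-1)k_i⁽ʲ⁾`) and `y ∈ H̃(n,m)` with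
`y_j = e_{q_j}`, one has
`d(x,y)² = Σⱼ (1 - n - 2k₀⁽ʲ⁾ - (k₀⁽ʲ⁾)²/n + Σᵢ i²k_i⁽ʲ⁾ + 2Σᵢ i·l_i⁽ʲ⁾)`,
where `l_i⁽ʲ⁾` indicates whether the `q_j`-th entry of `x_j` equals
`k₀⁽ʲ⁾/n - i + 1`. -/
theorem stmt_12 (n m : ℕ) (hn : 0 < n)
    (t : Fin m → ℕ) (k : Fin m → ℕ → ℕ) (k0 : Fin m → ℕ)
    (x : Fin m → Fin n → ℝ) (q : Fin m → Fin n)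
    (hcount : ∀ j, ∀ i ∈ Finset.Icc 1 (t j),
      (Finset.univ.filter
        (fun p : Fin n => x j p = (k0 j : ℝ) / (n : ℝ) - (i : ℝ) + 1)).card = k j i)
    (hsum : ∀ j, ∑ i ∈ Finset.Icc 1 (t j), k j i = n)
    (hk0 : ∀ j, k0 j = 1 + ∑ i ∈ Finset.Icc 1 (t j), (i - 1) * k j i)
    (l : Fin m → ℕ → ℝ)
    (hl : ∀ j i, l j i =
      if x j (q j) = (k0 j : ℝ) / (n : ℝ) - (i : ℝ) + 1 then 1 else 0) :
    ∑ j, ∑ p, (x j p - (if p = q j then (1 : ℝ) else 0)) ^ 2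
      = ∑ j, (1 - (n : ℝ) - 2 * (k0 j : ℝ) - (k0 j : ℝ) ^ 2 / (n : ℝ)
          + (∑ i ∈ Finset.Icc 1 (t j), (i : ℝ) ^ 2 * (k j i : ℝ))
          + 2 * ∑ i ∈ Finset.Icc 1 (t j), (i : ℝ) * l j i) := by
  apply Finset.sum_congr rfl
  intro j _
  simp_rw [hl j]
  exact block_eq n (t j) hn (k j) (k0 j) (x j) (q j) (hcount j) (hsum j) (hk0 j)
end

section
/- Let parameters k_i⁽ʲ⁾ define X with some t_l ≥ 3, and let X' be obtained by the modification: if t_l ≥ 4, decrease k₁⁽ˡ⁾ by 1, increase k₂⁽ˡ⁾ by 1, increase k_{t_l−1}⁽ˡ⁾ by 1, decrease k_{t_l}⁽ˡ⁾ by 1; if t_l = 3, decrease k₁⁽ˡ⁾ by 1, increase k₂⁽ˡ⁾ by 2, decrease k₃⁽ˡ⁾ by 1. Then M_X − M_{X'} = 2(2t_l − t_l' − 2), where t_l' = t_l if k_{t_l}⁽ˡ⁾ ≥ 2 and t_l' = t_l − 1 if k_{t_l}⁽ˡ⁾ = 1; in particular, if M_X is even then M_{X'} is even and M_X > M_{X'}.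 -/
/-- The modification lemma: if `t_L ≥ 3` and `X'` is obtained from `X` by the
stated modification of the parameters in block `L`, then
`M_X - M_{X'} = 2(2t_L - t_L' - 2)`, where `t_L' = t_L` if `k_{t_L}⁽ᴸ⁾ ≥ 2`
and `t_L' = t_L - 1` if `k_{t_L}⁽ᴸ⁾ = 1`; in particular, if `M_X` is even then
`M_{X'}` is even and `M_X > M_{X'}`. -/
theorem stmt_14 (m n : ℕ) (hn : 0 < n) (L : ℕ) (hL : L ∈ Finset.Icc 1 m)
    (t t' : ℕ → ℕ) (k k' : ℕ → ℕ → ℤ) (k0 : ℕ → ℤ)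
    (htL : 3 ≤ t L) (hkt : 1 ≤ k L (t L))
    (ht'other : ∀ j, j ≠ L → t' j = t j)
    (hk'other : ∀ j, j ≠ L → ∀ i, k' j i = k j i)
    (ht'L : (2 ≤ k L (t L) → t' L = t L) ∧ (k L (t L) = 1 → t' L = t L - 1))
    (hmod4 : 4 ≤ t L →
      k' L 1 = k L 1 - 1 ∧ k' L 2 = k L 2 + 1 ∧
      k' L (t L - 1) = k L (t L - 1) + 1 ∧ k' L (t L) = k L (t L) - 1 ∧
      ∀ i, i ≠ 1 → i ≠ 2 → i ≠ t L - 1 → i ≠ t L → k' L i = k L i)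
    (hmod3 : t L = 3 →
      k' L 1 = k L 1 - 1 ∧ k' L 2 = k L 2 + 2 ∧ k' L 3 = k L 3 - 1) :
    (∑ j ∈ Finset.Icc 1 m,
        (1 - (n : ℝ) - 2 * (k0 j : ℝ) - (k0 j : ℝ) ^ 2 / (n : ℝ)
          + (∑ i ∈ Finset.Icc 1 (t j), (i : ℝ) ^ 2 * (k j i : ℝ))
          + 2 * (t j : ℝ)))
      - (∑ j ∈ Finset.Icc 1 m,
        (1 - (n : ℝ) - 2 * (k0 j : ℝ) - (k0 j : ℝ) ^ 2 / (n : ℝ)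
          + (∑ i ∈ Finset.Icc 1 (t' j), (i : ℝ) ^ 2 * (k' j i : ℝ))
          + 2 * (t' j : ℝ)))
      = 2 * (2 * (t L : ℝ) - (t' L : ℝ) - 2) ∧
    ((∃ z : ℤ, (∑ j ∈ Finset.Icc 1 m,
        (1 - (n : ℝ) - 2 * (k0 j : ℝ) - (k0 j : ℝ) ^ 2 / (n : ℝ)
          + (∑ i ∈ Finset.Icc 1 (t j), (i : ℝ) ^ 2 * (k j i : ℝ))
          + 2 * (t j : ℝ))) = 2 * (z : ℝ)) →
      (∃ z : ℤ, (∑ j ∈ Finset.Icc 1 m,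
        (1 - (n : ℝ) - 2 * (k0 j : ℝ) - (k0 j : ℝ) ^ 2 / (n : ℝ)
          + (∑ i ∈ Finset.Icc 1 (t' j), (i : ℝ) ^ 2 * (k' j i : ℝ))
          + 2 * (t' j : ℝ))) = 2 * (z : ℝ)) ∧
      (∑ j ∈ Finset.Icc 1 m,
        (1 - (n : ℝ) - 2 * (k0 j : ℝ) - (k0 j : ℝ) ^ 2 / (n : ℝ)
          + (∑ i ∈ Finset.Icc 1 (t' j), (i : ℝ) ^ 2 * (k' j i : ℝ))
          + 2 * (t' j : ℝ)))
        < (∑ j ∈ Finset.Icc 1 m,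
        (1 - (n : ℝ) - 2 * (k0 j : ℝ) - (k0 j : ℝ) ^ 2 / (n : ℝ)
          + (∑ i ∈ Finset.Icc 1 (t j), (i : ℝ) ^ 2 * (k j i : ℝ))
          + 2 * (t j : ℝ)))) := by
  have hk't : k' L (t L) = k L (t L) - 1 := by
    rcases eq_or_lt_of_le htL with h3 | h4
    · have h := hmod3 h3.symm
      rw [← h3]; exact h.2.2
    · exact (hmod4 h4).2.2.2.1
  -- t' L ≤ t L and t' L value facts
  have hcase : k L (t L) = 1 ∨ 2 ≤ k L (t L) := by omega
  have ht'le : t' L ≤ t L := by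
    rcases hcase with h | h
    · rw [ht'L.2 h]; omega
    · rw [ht'L.1 h]
  -- reduce the sum over Icc 1 (t' L) to Icc 1 (t L)
  have hS2 : (∑ i ∈ Finset.Icc 1 (t' L), (i : ℝ) ^ 2 * (k' L i : ℝ))
      = ∑ i ∈ Finset.Icc 1 (t L), (i : ℝ) ^ 2 * (k' L i : ℝ) := by
    rcases hcase with h | h
    · rw [ht'L.2 h]
      have ht : t L = (t L - 1) + 1 := by omega
      rw [ht, Finset.sum_Icc_succ_top (by omega : 1 ≤ t L - 1 + 1)]
      rw [← ht]
      have : k' L (t L) = 0 := by omega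
      rw [this]; push_cast; ring
    · rw [ht'L.1 h]
  -- key sum difference
  have hS : (∑ i ∈ Finset.Icc 1 (t L), (i : ℝ) ^ 2 * (k L i : ℝ))
      - (∑ i ∈ Finset.Icc 1 (t' L), (i : ℝ) ^ 2 * (k' L i : ℝ))
      = 2 * (t L : ℝ) - 4 := by
    rw [hS2, ← Finset.sum_sub_distrib]
    have heq : ∀ i ∈ Finset.Icc 1 (t L),
        (i : ℝ) ^ 2 * (k L i : ℝ) - (i : ℝ) ^ 2 * (k' L i : ℝ)
        = (i : ℝ) ^ 2 * ((k L i : ℝ) - (k' L i : ℝ)) := by intro i _; ring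
    rw [Finset.sum_congr rfl heq]
    rcases eq_or_lt_of_le htL with h3 | h4
    · have h := hmod3 h3.symm
      rw [← h3]
      have : Finset.Icc 1 3 = ({1, 2, 3} : Finset ℕ) := by decide
      rw [this, Finset.sum_insert (by decide), Finset.sum_insert (by decide),
        Finset.sum_singleton, h.1, h.2.1, h.2.2]
      push_cast; ring
    · obtain ⟨h1, h2, h3, h4', h5⟩ := hmod4 h4
      have hsub : ({1, 2, t L - 1, t L} : Finset ℕ) ⊆ Finset.Icc 1 (t L) := by
        intro i hi
        simp only [Finset.mem_insert, Finset.mem_singleton] at hi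
        simp only [Finset.mem_Icc]; omega
      rw [← Finset.sum_subset hsub (by
        intro i _ hni
        simp only [Finset.mem_insert, Finset.mem_singleton, not_or] at hni
        rw [h5 i hni.1 hni.2.1 hni.2.2.1 hni.2.2.2]; ring)]
      have e1 : (1 : ℕ) ∉ ({2, t L - 1, t L} : Finset ℕ) := by simp; omega
      have e2 : (2 : ℕ) ∉ ({t L - 1, t L} : Finset ℕ) := by simp; omega
      have e3 : (t L - 1 : ℕ) ∉ ({t L} : Finset ℕ) := by simp; omega
      rw [show ({1, 2, t L - 1, t L} : Finset ℕ)
          = insert 1 (insert 2 (insert (t L - 1) {t L})) from rfl,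
        Finset.sum_insert e1, Finset.sum_insert e2, Finset.sum_insert e3,
        Finset.sum_singleton, h1, h2, h3, h4']
      have hc : ((t L - 1 : ℕ) : ℝ) = (t L : ℝ) - 1 := by
        push_cast [Nat.cast_sub (by omega : 1 ≤ t L)]; ring
      rw [hc]; push_cast; ring
  -- main equality
  have key : (∑ j ∈ Finset.Icc 1 m,
        (1 - (n : ℝ) - 2 * (k0 j : ℝ) - (k0 j : ℝ) ^ 2 / (n : ℝ)
          + (∑ i ∈ Finset.Icc 1 (t j), (i : ℝ) ^ 2 * (k j i : ℝ))
          + 2 * (t j : ℝ)))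
      - (∑ j ∈ Finset.Icc 1 m,
        (1 - (n : ℝ) - 2 * (k0 j : ℝ) - (k0 j : ℝ) ^ 2 / (n : ℝ)
          + (∑ i ∈ Finset.Icc 1 (t' j), (i : ℝ) ^ 2 * (k' j i : ℝ))
          + 2 * (t' j : ℝ)))
      = 2 * (2 * (t L : ℝ) - (t' L : ℝ) - 2) := by
    rw [← Finset.sum_sub_distrib]
    rw [Finset.sum_eq_single_of_mem L hL (by
      intro j _ hjL
      rw [ht'other j hjL]
      have : ∀ i ∈ Finset.Icc 1 (t j), (i : ℝ) ^ 2 * (k' j i : ℝ)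
          = (i : ℝ) ^ 2 * (k j i : ℝ) := by
        intro i _; rw [hk'other j hjL i]
      rw [Finset.sum_congr rfl this]; ring)]
    have := hS
    linarith [hS]
  refine ⟨key, fun ⟨z, hz⟩ => ⟨⟨z - (2 * (t L : ℤ) - (t' L : ℤ) - 2), by
    have : ((z - (2 * (t L : ℤ) - (t' L : ℤ) - 2) : ℤ) : ℝ)
        = (z : ℝ) - (2 * (t L : ℝ) - (t' L : ℝ) - 2) := by push_cast; ring
    rw [this]; linarith [key, hz]⟩, by
    have hpos : (0 : ℝ) < 2 * (2 * (t L : ℝ) - (t' L : ℝ) - 2) := by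
      have h1 : (t' L : ℝ) ≤ (t L : ℝ) := by exact_mod_cast ht'le
      have h2 : (3 : ℝ) ≤ (t L : ℝ) := by exact_mod_cast htL
      linarith
    linarith [key]⟩⟩
end

section
/- If M_X is even and every vector of X together with H̃(n,m) forms an m-distance set, then the set Y obtained by appending i copies of the all-ones block (1ⁿ) to each vector of X satisfies M_Y = M_X + i(n−1); if moreover i is even when n is even (i arbitrary when n is odd), then M_Y is an even integer at most 2(m + in). -/
/-!
Each appended all-ones block has parameters `t = 1`, `k₀ = 1`, `k₁ = n`, so it contributes
`1 - 1/n` to `M`; the `i·n` new blocks therefore add exactly `i(n - 1)`. This increment is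
even because `n - 1` is even when `n` is odd and `i` is even otherwise, and it is at most
`2in`, which gives the parity and the size bound for `M_Y`.
-/

open Finset

/-- The contribution of one block with parameters `t`, `k`, `k₀` to `M`. -/
noncomputable def paramTerm (n t : ℕ) (k : ℕ → ℤ) (k0 : ℤ) : ℝ :=
  1 - (n : ℝ) - 2 * (k0 : ℝ) - (k0 : ℝ) ^ 2 / (n : ℝ)
    + (∑ p ∈ Icc 1 t, (p : ℝ) ^ 2 * (k p : ℝ)) + 2 * (t : ℝ)

lemma paramTerm_allOnes (n : ℕ) (k : ℕ → ℤ) (hk : k 1 = n) :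
    paramTerm n 1 k 1 = 1 - 1 / n := by
  simp [paramTerm, hk]
  ring

lemma sum_Icc_one_add_of_eqOn {M : Type*} [AddCommMonoid M] (f : ℕ → M) (m N : ℕ) (c : M)
    (h : ∀ j ∈ Icc (m + 1) (m + N), f j = c) :
    ∑ j ∈ Icc 1 (m + N), f j = ∑ j ∈ Icc 1 m, f j + N • c := by
  have hsplit := sum_Ioc_consecutive f (Nat.zero_le m) (Nat.le_add_right m N)
  have htail : ∑ j ∈ Ioc m (m + N), f j = N • c := by
    rw [sum_congr rfl fun j hj => h j (by simpa using hj), sum_const, Nat.card_Ioc,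
      Nat.add_sub_cancel_left]
  exact htail ▸ hsplit.symm

lemma even_intCast_mul_sub_one {n i : ℕ} (hpar : Even n → Even i) :
    Even ((i : ℤ) * ((n : ℤ) - 1)) := by
  rcases Nat.even_or_odd n with hn | hn
  · exact (Int.even_coe_nat i |>.mpr (hpar hn)).mul_right _
  · exact (Int.even_sub_one.mpr (Int.not_even_iff_odd.mpr (by exact_mod_cast hn))).mul_left _

lemma exists_eq_two_mul_of_eq_add {MX MY : ℝ} {n i : ℕ} (hY : MY = MX + i * ((n : ℝ) - 1))
    (hX : ∃ z : ℤ, MX = 2 * (z : ℝ)) (hpar : Even n → Even i) :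
    ∃ z : ℤ, MY = 2 * (z : ℝ) := by
  obtain ⟨z, hz⟩ := hX
  obtain ⟨c, hc⟩ := even_intCast_mul_sub_one hpar
  refine ⟨z + c, ?_⟩
  have hc' : (i : ℝ) * ((n : ℝ) - 1) = c + c := by exact_mod_cast hc
  rw [hY, hz, hc']
  push_cast
  ring

lemma le_two_mul_of_eq_add {MX MY : ℝ} {m n i : ℕ} (hY : MY = MX + i * ((n : ℝ) - 1))
    (hX : MX ≤ 2 * (m : ℝ)) : MY ≤ 2 * ((m : ℝ) + (i : ℝ) * (n : ℝ)) := by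
  have : (0 : ℝ) ≤ i * n := by positivity
  nlinarith [(Nat.cast_nonneg i : (0 : ℝ) ≤ i)]

/-- Appending `i·n` all-ones blocks (parameters `t_j = 1`, `k₀⁽ʲ⁾ = 1`,
`k₁⁽ʲ⁾ = n`) to the parameter set `X` yields `Y` with
`M_Y = M_X + i(n-1)`; if moreover `M_X` is an even positive integer at most
`2m`, and `i` is even whenever `n` is even, then `M_Y` is even and
`M_Y ≤ 2(m + in)`. -/
theorem stmt_17 (n m i : ℕ) (hn : 2 ≤ n)
    (t : ℕ → ℕ) (k : ℕ → ℕ → ℤ) (k0 : ℕ → ℤ)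
    (hnew : ∀ j ∈ Finset.Icc (m + 1) (m + i * n),
      t j = 1 ∧ k0 j = 1 ∧ k j 1 = (n : ℤ)) :
    (∑ j ∈ Finset.Icc 1 (m + i * n),
        (1 - (n : ℝ) - 2 * (k0 j : ℝ) - (k0 j : ℝ) ^ 2 / (n : ℝ)
          + (∑ p ∈ Finset.Icc 1 (t j), (p : ℝ) ^ 2 * (k j p : ℝ))
          + 2 * (t j : ℝ)))
      = (∑ j ∈ Finset.Icc 1 m,
        (1 - (n : ℝ) - 2 * (k0 j : ℝ) - (k0 j : ℝ) ^ 2 / (n : ℝ)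
          + (∑ p ∈ Finset.Icc 1 (t j), (p : ℝ) ^ 2 * (k j p : ℝ))
          + 2 * (t j : ℝ)))
        + (i : ℝ) * ((n : ℝ) - 1) ∧
    ((∃ z : ℤ, (∑ j ∈ Finset.Icc 1 m,
        (1 - (n : ℝ) - 2 * (k0 j : ℝ) - (k0 j : ℝ) ^ 2 / (n : ℝ)
          + (∑ p ∈ Finset.Icc 1 (t j), (p : ℝ) ^ 2 * (k j p : ℝ))
          + 2 * (t j : ℝ))) = 2 * (z : ℝ)) →
      0 < (∑ j ∈ Finset.Icc 1 m,
        (1 - (n : ℝ) - 2 * (k0 j : ℝ) - (k0 j : ℝ) ^ 2 / (n : ℝ)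
          + (∑ p ∈ Finset.Icc 1 (t j), (p : ℝ) ^ 2 * (k j p : ℝ))
          + 2 * (t j : ℝ))) →
      (∑ j ∈ Finset.Icc 1 m,
        (1 - (n : ℝ) - 2 * (k0 j : ℝ) - (k0 j : ℝ) ^ 2 / (n : ℝ)
          + (∑ p ∈ Finset.Icc 1 (t j), (p : ℝ) ^ 2 * (k j p : ℝ))
          + 2 * (t j : ℝ))) ≤ 2 * (m : ℝ) →
      (Even n → Even i) →
      (∃ z : ℤ, (∑ j ∈ Finset.Icc 1 (m + i * n),
        (1 - (n : ℝ) - 2 * (k0 j : ℝ) - (k0 j : ℝ) ^ 2 / (n : ℝ)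
          + (∑ p ∈ Finset.Icc 1 (t j), (p : ℝ) ^ 2 * (k j p : ℝ))
          + 2 * (t j : ℝ))) = 2 * (z : ℝ)) ∧
      (∑ j ∈ Finset.Icc 1 (m + i * n),
        (1 - (n : ℝ) - 2 * (k0 j : ℝ) - (k0 j : ℝ) ^ 2 / (n : ℝ)
          + (∑ p ∈ Finset.Icc 1 (t j), (p : ℝ) ^ 2 * (k j p : ℝ))
          + 2 * (t j : ℝ))) ≤ 2 * ((m : ℝ) + (i : ℝ) * (n : ℝ))) := by
  have hn0 : (n : ℝ) ≠ 0 := by positivity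
  have key : ∑ j ∈ Icc 1 (m + i * n), paramTerm n (t j) (k j) (k0 j)
      = ∑ j ∈ Icc 1 m, paramTerm n (t j) (k j) (k0 j) + i * ((n : ℝ) - 1) := by
    rw [sum_Icc_one_add_of_eqOn _ m (i * n) (1 - 1 / (n : ℝ)) fun j hj => ?_]
    · rw [nsmul_eq_mul]
      push_cast
      field_simp
    · obtain ⟨ht, hk0, hk⟩ := hnew j hj
      rw [ht, hk0]
      exact paramTerm_allOnes n (k j) hk
  exact ⟨key, fun hX _ hle hpar =>
    ⟨exists_eq_two_mul_of_eq_add key hX hpar, le_two_mul_of_eq_add key hle⟩⟩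
end
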